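/- arXiv:math/9808072 — 4 statements merged into one kernel-verified Lean document; each statement's English description precedes it below -/
import Mathlib

section
/- A group homomorphism Φ : G → H between Lie groups that is smooth intertwines the evolution operators: Evol_H(Φ' ∘ X) = Φ ∘ Evol_G(X) for every smooth curve X : ℝ → 𝔤, where Φ' : 𝔤 → 𝔥 is the derivative of Φ at the identity. -/
open scoped Manifold

/-! Differentiating `Φ (g * c t) = Φ g * Φ (c t)` at `g = 1` shows that `T_{c t} Φ` carries the
right translate of `X t` to the right translate of `Φ' (X t)`; the chain rule for `Φ ∘ c` does
the rest. -/

section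

variable {𝕜 : Type*} [NontriviallyNormedField 𝕜]
  {E : Type*} [NormedAddCommGroup E] [NormedSpace 𝕜 E] {HG : Type*} [TopologicalSpace HG]
  {I : ModelWithCorners 𝕜 E HG} {G : Type*} [TopologicalSpace G] [ChartedSpace HG G] [Monoid G]
  [ContMDiffMul I 1 G]
  {E' : Type*} [NormedAddCommGroup E'] [NormedSpace 𝕜 E'] {HG' : Type*} [TopologicalSpace HG']
  {I' : ModelWithCorners 𝕜 E' HG'} {G' : Type*} [TopologicalSpace G'] [ChartedSpace HG' G']
  [Monoid G'] [ContMDiffMul I' 1 G']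

theorem MonoidHom.mfderiv_comp_mfderiv_mul_right (Φ : G →* G') (g : G)
    (hΦ₁ : MDifferentiableAt I I' Φ 1) (hΦg : MDifferentiableAt I I' Φ g) :
    (mfderiv I I' Φ g).comp (mfderiv I I (· * g) 1) =
      (mfderiv I' I' (· * Φ g) 1).comp (mfderiv I I' Φ 1) := by
  have hsemiconj : Φ ∘ (· * g) = (· * Φ g) ∘ Φ := funext fun a => map_mul Φ a g
  have h : mfderiv I I' (Φ ∘ (· * g)) 1 = mfderiv I I' ((· * Φ g) ∘ Φ) 1 := by rw [hsemiconj]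
  rwa [mfderiv_comp_of_eq hΦg mdifferentiableAt_mul_right (one_mul g),
    mfderiv_comp_of_eq mdifferentiableAt_mul_right hΦ₁ (map_one Φ), one_mul, map_one] at h

end

/-- A smooth group homomorphism `Φ : G → H` between Lie groups intertwines the
evolution operators: if `c = Evol_G (X)` (i.e. `c 0 = e` and the right logarithmic derivative of
`c` is `X`), then `Φ ∘ c` satisfies `(Φ ∘ c) 0 = e` and its right logarithmic derivative is
`Φ' ∘ X`, where `Φ' = T_e Φ` is the derivative of `Φ` at the identity; hence
`Evol_H (Φ' ∘ X) = Φ ∘ Evol_G (X)`. -/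
theorem homomorphism_intertwines_evolution
    {E : Type*} [NormedAddCommGroup E] [NormedSpace ℝ E]
    {G : Type*} [TopologicalSpace G] [ChartedSpace E G] [Group G] [LieGroup 𝓘(ℝ, E) (⊤ : ℕ∞) G]
    {F : Type*} [NormedAddCommGroup F] [NormedSpace ℝ F]
    {H : Type*} [TopologicalSpace H] [ChartedSpace F H] [Group H] [LieGroup 𝓘(ℝ, F) (⊤ : ℕ∞) H]
    (Φ : G → H)
    (hΦ_smooth : ContMDiff 𝓘(ℝ, E) 𝓘(ℝ, F) (⊤ : ℕ∞) Φ)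
    (hΦ_hom : ∀ a b : G, Φ (a * b) = Φ a * Φ b)
    (X : ℝ → E) (c : ℝ → G)
    (hc_smooth : ContMDiff 𝓘(ℝ) 𝓘(ℝ, E) (⊤ : ℕ∞) c)
    (hc0 : c 0 = 1)
    -- `c` has right logarithmic derivative `X`, i.e. `c = Evol_G (X)`:
    (hc : ∀ t : ℝ, mfderiv 𝓘(ℝ) 𝓘(ℝ, E) c t (1 : ℝ) =
      mfderiv 𝓘(ℝ, E) 𝓘(ℝ, E) (fun g : G => g * c t) 1 (X t)) :
    (Φ ∘ c) 0 = 1 ∧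
    ∀ t : ℝ, mfderiv 𝓘(ℝ) 𝓘(ℝ, F) (Φ ∘ c) t (1 : ℝ) =
      mfderiv 𝓘(ℝ, F) 𝓘(ℝ, F) (fun h : H => h * Φ (c t)) 1
        (mfderiv 𝓘(ℝ, E) 𝓘(ℝ, F) Φ 1 (X t)) := by
  let Ψ : G →* H := MonoidHom.mk' Φ hΦ_hom
  have hΦ : MDifferentiable 𝓘(ℝ, E) 𝓘(ℝ, F) Φ := hΦ_smooth.mdifferentiable (by simp)
  refine ⟨show Φ (c 0) = 1 from hc0 ▸ map_one Ψ, fun t => ?_⟩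
  rw [mfderiv_comp t (hΦ (c t)) (hc_smooth.mdifferentiableAt (by simp))]
  exact (congrArg _ (hc t)).trans <|
    DFunLike.congr_fun (Ψ.mfderiv_comp_mfderiv_mul_right (c t) (hΦ 1) (hΦ (c t))) (X t)
end

section
/- Let G be an abelian, connected, simply connected regular Lie group with Lie algebra 𝔤. Then the exponential map exp : 𝔤 → G is an isomorphism of Lie groups (in particular a diffeomorphism), where 𝔤 carries its additive group structure. -/
open scoped Manifold
open Set

namespace SCAE

variable {E : Type*} [NormedAddCommGroup E] [NormedSpace ℝ E] [CompleteSpace E]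
variable {G : Type*} [TopologicalSpace G] [ChartedSpace E G] [CommGroup G]
  [LieGroup 𝓘(ℝ, E) (⊤ : ℕ∞) G]

section Basic
variable {exp : E → G} (hhom : ∀ x y : E, exp (x + y) = exp x * exp y)
include hhom

theorem exp_zero : exp 0 = 1 := by
  have h := hhom 0 0
  rw [add_zero] at h
  exact left_eq_mul.mp h

theorem exp_neg (x : E) : exp (-x) = (exp x)⁻¹ := by
  apply eq_inv_of_mul_eq_one_left
  rw [← hhom, neg_add_cancel, exp_zero hhom]

theorem exp_sub (x y : E) : exp (x - y) = exp x * (exp y)⁻¹ := by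
  rw [sub_eq_add_neg, hhom, exp_neg hhom]

end Basic

theorem local_data {exp : E → G}
    (hs : ContMDiff 𝓘(ℝ, E) 𝓘(ℝ, E) (⊤ : ℕ∞) exp)
    (hhom : ∀ x y : E, exp (x + y) = exp x * exp y)
    (hder : ∀ v : E, mfderiv 𝓘(ℝ, E) 𝓘(ℝ, E) exp 0 v = v) :
    ∃ (W : Set G) (L : G → E), IsOpen W ∧ (1:G) ∈ W ∧ ContinuousOn L W ∧
      (∀ w ∈ W, exp (L w) = w) ∧ ContMDiffAt 𝓘(ℝ, E) 𝓘(ℝ, E) (⊤ : ℕ∞) L 1 ∧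
      ∃ ε > 0, ∀ x : E, ‖x‖ < ε → exp x = 1 → x = 0 := by
  have hexp0 : exp 0 = 1 := exp_zero hhom
  set c : OpenPartialHomeomorph G E := chartAt E (1:G) with hc_def
  have h1 : (1:G) ∈ c.source := mem_chart_source E 1
  have hc : c.MDifferentiable 𝓘(ℝ, E) 𝓘(ℝ, E) := mdifferentiable_chart (I := 𝓘(ℝ, E)) 1
  set D : E ≃L[ℝ] E := hc.mfderiv h1 with hD_def
  have hcont : Continuous exp := hs.continuous
  -- the composite map in charts
  set f : E → E := c ∘ exp with hf_def
  have hcAt : ContMDiffAt 𝓘(ℝ, E) 𝓘(ℝ, E) (⊤ : ℕ∞) c (exp 0) := by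
    rw [hexp0]
    exact (contMDiffOn_chart (I := 𝓘(ℝ, E))).contMDiffAt (c.open_source.mem_nhds h1)
  have hfm : ContMDiffAt 𝓘(ℝ, E) 𝓘(ℝ, E) (⊤ : ℕ∞) f 0 := hcAt.comp 0 (hs.contMDiffAt)
  have hfd : ContDiffAt ℝ ((⊤ : ℕ∞) : WithTop ℕ∞) f 0 := hfm.contDiffAt
  have hmexp : mfderiv 𝓘(ℝ, E) 𝓘(ℝ, E) exp 0 = ContinuousLinearMap.id ℝ E :=
    ContinuousLinearMap.ext hder
  have hmdc : MDifferentiableAt 𝓘(ℝ, E) 𝓘(ℝ, E) c (exp 0) := by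
    rw [hexp0]; exact hc.mdifferentiableAt h1
  have hmf : mfderiv 𝓘(ℝ, E) 𝓘(ℝ, E) f 0 = (D : E →L[ℝ] E) := by
    rw [hf_def, mfderiv_comp 0 hmdc (hs.mdifferentiableAt (by simp))]
    refine ContinuousLinearMap.ext fun v => ?_
    have h9 : (mfderiv 𝓘(ℝ, E) 𝓘(ℝ, E) exp 0) v = v := hder v
    simp only [ContinuousLinearMap.coe_comp', Function.comp_apply, h9]
    rw [hexp0]
    rfl
  have hn1 : (1 : WithTop ℕ∞) ≤ ((⊤ : ℕ∞) : WithTop ℕ∞) := by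
    exact_mod_cast (le_top : (1 : ℕ∞) ≤ ⊤)
  have hn0 : ((⊤ : ℕ∞) : WithTop ℕ∞) ≠ 0 := by simp
  have hfder : HasFDerivAt f (D : E →L[ℝ] E) 0 := by
    have h3 : DifferentiableAt ℝ f 0 := hfd.differentiableAt hn0
    have h4 := h3.hasFDerivAt
    rwa [← mfderiv_eq_fderiv, hmf] at h4
  set P : OpenPartialHomeomorph E E := hfd.toOpenPartialHomeomorph f hfder hn0 with hP_def
  have hPcoe : (P : E → E) = f := hfd.toOpenPartialHomeomorph_coe hfder hn0
  have hP0 : (0 : E) ∈ P.source := hfd.mem_toOpenPartialHomeomorph_source hfder hn0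
  have hPf0 : f 0 ∈ P.target := hfd.image_mem_toOpenPartialHomeomorph_target hfder hn0
  have hsymm0 : P.symm (f 0) = 0 := by
    have := P.left_inv hP0
    rwa [hPcoe] at this
  -- the open set N in the chart target
  set N : Set E := P.target ∩ P.symm ⁻¹' (exp ⁻¹' c.source) with hN_def
  have hNopen : IsOpen N := P.isOpen_inter_preimage_symm (hcont.isOpen_preimage _ c.open_source)
  have hfc1 : f 0 = c 1 := by rw [hf_def]; simp [Function.comp, hexp0]
  have hN1 : c 1 ∈ N := by
    rw [← hfc1]
    refine ⟨hPf0, ?_⟩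
    simp only [mem_preimage, hsymm0, hexp0]
    exact h1
  set W : Set G := c.source ∩ c ⁻¹' N with hW_def
  have hWopen : IsOpen W := c.isOpen_inter_preimage hNopen
  have hW1 : (1:G) ∈ W := ⟨h1, hN1⟩
  set L : G → E := fun g => P.symm (c g) with hL_def
  have hWL : ∀ w ∈ W, exp (L w) = w := by
    intro w hw
    have hcw : c w ∈ N := hw.2
    have h5 : f (P.symm (c w)) = c w := by
      have := P.right_inv hcw.1
      rwa [hPcoe] at this
    have h6 : exp (L w) ∈ c.source := hcw.2
    refine c.injOn h6 hw.1 ?_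
    exact h5
  have hLcont : ContinuousOn L W := by
    apply P.continuousOn_symm.comp (c.continuousOn.mono inter_subset_left)
    intro w hw
    exact (hw.2 : c w ∈ N).1
  have hLsm : ContMDiffAt 𝓘(ℝ, E) 𝓘(ℝ, E) (⊤ : ℕ∞) L 1 := by
    have hinv : ContDiffAt ℝ ((⊤ : ℕ∞) : WithTop ℕ∞) (hfd.localInverse hfder hn0) (f 0) :=
      hfd.to_localInverse hfder hn0
    have hloc : ContDiffAt ℝ ((⊤ : ℕ∞) : WithTop ℕ∞) P.symm (c 1) := by
      rw [← hfc1]; exact hinv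
    have hcm1 : ContMDiffAt 𝓘(ℝ, E) 𝓘(ℝ, E) (⊤ : ℕ∞) c 1 :=
      (contMDiffOn_chart (I := 𝓘(ℝ, E))).contMDiffAt (c.open_source.mem_nhds h1)
    exact (hloc.contMDiffAt).comp 1 hcm1
  obtain ⟨ε, hε, hball⟩ := Metric.mem_nhds_iff.mp (P.open_source.mem_nhds hP0)
  refine ⟨W, L, hWopen, hW1, hLcont, hWL, hLsm, ε, hε, ?_⟩
  intro x hx hex
  have hxs : x ∈ P.source := hball (by simpa [Metric.mem_ball, dist_zero_right] using hx)
  have h7 : f x = f 0 := by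
    rw [hf_def]; simp [Function.comp, hex, hexp0]
  have := P.injOn hxs hP0
  rw [hPcoe] at this
  exact this h7



theorem surj {exp : E → G} (hhom : ∀ x y : E, exp (x + y) = exp x * exp y)
    (hcont : Continuous exp) {W : Set G} (hWo : IsOpen W) (hW1 : (1:G) ∈ W)
    {L : G → E} (hWL : ∀ w ∈ W, exp (L w) = w) [ConnectedSpace G] :
    Function.Surjective exp := by
  haveI : IsTopologicalGroup G := topologicalGroup_of_lieGroup 𝓘(ℝ, E) (⊤ : ℕ∞)
  let S : Subgroup G :=
    { carrier := Set.range exp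
      mul_mem' := by rintro a b ⟨x, rfl⟩ ⟨y, rfl⟩; exact ⟨x + y, hhom x y⟩
      one_mem' := ⟨0, exp_zero hhom⟩
      inv_mem' := by rintro a ⟨x, rfl⟩; exact ⟨-x, exp_neg hhom x⟩ }
  have hSopen : IsOpen (S : Set G) := by
    apply Subgroup.isOpen_of_mem_nhds
    exact Filter.mem_of_superset (hWo.mem_nhds hW1) (fun w hw => ⟨L w, hWL w hw⟩)
  have hSclosed : IsClosed (S : Set G) := S.isClosed_of_isOpen hSopen
  have huniv : (S : Set G) = univ :=
    IsClopen.eq_univ ⟨hSclosed, hSopen⟩ ⟨1, S.one_mem⟩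
  intro g
  have : g ∈ (S : Set G) := huniv ▸ mem_univ g
  exact this

theorem disc {exp : E → G} (hhom : ∀ x y : E, exp (x + y) = exp x * exp y)
    {ε : ℝ} (hε : 0 < ε) (hsep : ∀ x : E, ‖x‖ < ε → exp x = 1 → x = 0)
    {A : Type*} [TopologicalSpace A] {s : Set A} (hps : IsPreconnected s) {d : A → E}
    (hd : ContinuousOn d s) (h1 : ∀ p ∈ s, exp (d p) = 1) {p q : A}
    (hp : p ∈ s) (hq : q ∈ s) : d p = d q := by
  by_contra hne
  have hT : IsPreconnected (d '' s) := hps.image d hd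
  have key : ∀ x ∈ d '' s, ∀ y ∈ d '' s, x ≠ y → ε ≤ dist x y := by
    rintro x ⟨a, ha, rfl⟩ y ⟨b, hb, rfl⟩ hxy
    by_contra hlt
    push_neg at hlt
    apply hxy
    have hmem : exp (d a - d b) = 1 := by
      rw [exp_sub hhom, h1 a ha, h1 b hb, mul_inv_cancel]
    have := hsep (d a - d b) (by rwa [← dist_eq_norm]) hmem
    exact sub_eq_zero.mp this
  have h2 := hT (Metric.ball (d p) ε) {z | ε / 2 < dist z (d p)}
    Metric.isOpen_ball (isOpen_lt continuous_const (continuous_id.dist continuous_const))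
    (by rintro z ⟨a, ha, rfl⟩
        rcases eq_or_ne (d a) (d p) with h | h
        · exact Or.inl (by simp [h, Metric.mem_ball, hε])
        · right
          have := key (d a) ⟨a, ha, rfl⟩ (d p) ⟨p, hp, rfl⟩ h
          simpa using lt_of_lt_of_le (by linarith) this)
    ⟨d p, ⟨p, hp, rfl⟩, by simp [Metric.mem_ball, hε]⟩
    ⟨d q, ⟨q, hq, rfl⟩, by
      have := key (d q) ⟨q, hq, rfl⟩ (d p) ⟨p, hp, rfl⟩ (fun h => hne (h ▸ rfl))
      simp only [mem_setOf_eq]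
      calc ε / 2 < ε := by linarith
        _ ≤ dist (d q) (d p) := this⟩
  obtain ⟨z, hzT, hz1, hz2⟩ := h2
  rw [Metric.mem_ball] at hz1
  rw [mem_setOf_eq] at hz2
  rcases eq_or_ne z (d p) with h | h
  · rw [h, dist_self] at hz2; linarith
  · have := key z hzT (d p) ⟨p, hp, rfl⟩ h
    linarith



theorem paste {A B : Type*} [TopologicalSpace A] [TopologicalSpace B] {s t : Set A}
    (hs : IsClosed s) (ht : IsClosed t) {f g : A → B}
    (hf : ContinuousOn f s) (hg : ContinuousOn g t) (hfg : EqOn f g (s ∩ t)) :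
    ∃ h : A → B, ContinuousOn h (s ∪ t) ∧ EqOn h f s ∧ EqOn h g t := by
  classical
  set h : A → B := fun p => if p ∈ s then f p else g p with hh_def
  have hhf : EqOn h f s := fun p hp => by simp [hh_def, hp]
  have hhg : EqOn h g t := by
    intro p hp
    by_cases hps : p ∈ s
    · simp only [hh_def, hps, if_pos]
      exact hfg ⟨hps, hp⟩
    · simp [hh_def, hps]
  refine ⟨h, ?_, hhf, hhg⟩
  intro p hp
  have hws : ContinuousWithinAt h s p := by
    by_cases hps : p ∈ s
    · exact ((hf p hps).congr hhf (hhf hps))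
    · exact continuousWithinAt_of_notMem_closure (by rwa [hs.closure_eq])
  have hwt : ContinuousWithinAt h t p := by
    by_cases hpt : p ∈ t
    · exact ((hg p hpt).congr hhg (hhg hpt))
    · exact continuousWithinAt_of_notMem_closure (by rwa [ht.closure_eq])
  exact hws.union hwt



theorem chain {exp : E → G} (hhom : ∀ x y : E, exp (x + y) = exp x * exp y)
    {W : Set G} {L : G → E} (hWL : ∀ w ∈ W, exp (L w) = w) (hLc : ContinuousOn L W)
    {H : ℝ × ℝ → G} (hH : Continuous H) {C : Set ℝ} (hC : IsClosed C)
    {n : ℕ} (hn : 0 < n)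
    (hsheet : ∀ i : ℕ, i < n → ∃ x : E,
      ∀ p ∈ C ×ˢ Icc ((i:ℝ)/n) (((i:ℝ)+1)/n), (exp x)⁻¹ * H p ∈ W)
    {f0 : ℝ → E} (hf0 : ContinuousOn f0 C) (hf0l : ∀ a ∈ C, exp (f0 a) = H (a, 0)) :
    ∃ F : ℝ × ℝ → E, ContinuousOn F (C ×ˢ Icc 0 1) ∧
      (∀ p ∈ C ×ˢ Icc 0 1, exp (F p) = H p) ∧ ∀ a ∈ C, F (a, 0) = f0 a := by
  haveI : IsTopologicalGroup G := topologicalGroup_of_lieGroup 𝓘(ℝ, E) (⊤ : ℕ∞)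
  have hnR : (0:ℝ) < n := by exact_mod_cast hn
  have main : ∀ k : ℕ, k ≤ n → ∃ F : ℝ × ℝ → E,
      ContinuousOn F (C ×ˢ Icc 0 ((k:ℝ)/n)) ∧
      (∀ p ∈ C ×ˢ Icc 0 ((k:ℝ)/n), exp (F p) = H p) ∧ ∀ a ∈ C, F (a, 0) = f0 a := by
    intro k
    induction k with
    | zero =>
      intro _
      refine ⟨fun p => f0 p.1, ?_, ?_, fun a _ => rfl⟩
      · exact hf0.comp continuous_fst.continuousOn (fun p hp => hp.1)
      · rintro ⟨a, b⟩ ⟨ha, hb⟩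
        simp only [Nat.cast_zero, zero_div] at hb
        have hb0 : b = 0 := le_antisymm hb.2 hb.1
        rw [hb0]
        exact hf0l a ha
    | succ k ih =>
      intro hk1
      obtain ⟨F, hFc, hFl, hF0⟩ := ih (Nat.le_of_succ_le hk1)
      obtain ⟨x, hx⟩ := hsheet k hk1
      have hk0 : (0:ℝ) ≤ (k:ℝ)/n := by positivity
      have hkk : (k:ℝ)/n ≤ ((k:ℝ)+1)/n := by
        gcongr <;> linarith [hnR]
      set e : ℝ → E := fun a => F (a, (k:ℝ)/n) with he_def
      have hec : ContinuousOn e C := by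
        apply hFc.comp (continuous_id.prodMk continuous_const).continuousOn
        intro a ha; exact ⟨ha, ⟨hk0, le_rfl⟩⟩
      have hel : ∀ a ∈ C, exp (e a) = H (a, (k:ℝ)/n) := fun a ha =>
        hFl (a, (k:ℝ)/n) ⟨ha, hk0, le_rfl⟩
      set Q : Set (ℝ × ℝ) := C ×ˢ Icc ((k:ℝ)/n) (((k:ℝ)+1)/n) with hQ_def
      set u : ℝ × ℝ → G := fun p => (exp x)⁻¹ * H p with hu_def
      have huc : Continuous u := continuous_const.mul hH
      set Fq : ℝ × ℝ → E :=
        fun p => e p.1 - L (u (p.1, (k:ℝ)/n)) + L (u p) with hFq_def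
      have hmem1 : ∀ p ∈ Q, u (p.1, (k:ℝ)/n) ∈ W := fun p hp =>
        hx (p.1, (k:ℝ)/n) ⟨hp.1, le_rfl, hkk⟩
      have hmem2 : ∀ p ∈ Q, u p ∈ W := fun p hp => hx p hp
      have hQc : ContinuousOn Fq Q := by
        refine ContinuousOn.add (ContinuousOn.sub ?_ ?_) ?_
        · exact hec.comp continuous_fst.continuousOn (fun p hp => hp.1)
        · exact hLc.comp
            ((huc.comp (continuous_fst.prodMk continuous_const)).continuousOn) hmem1
        · exact hLc.comp huc.continuousOn hmem2
      have hQl : ∀ p ∈ Q, exp (Fq p) = H p := by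
        intro p hp
        show exp (e p.1 - L (u (p.1, (k:ℝ)/n)) + L (u p)) = H p
        rw [hhom, exp_sub hhom, hWL _ (hmem1 p hp), hWL _ (hmem2 p hp), hel p.1 hp.1]
        show H (p.1, (k:ℝ)/n) * ((exp x)⁻¹ * H (p.1, (k:ℝ)/n))⁻¹ * ((exp x)⁻¹ * H p) = H p
        group
      have hclos1 : IsClosed (C ×ˢ Icc 0 ((k:ℝ)/n)) := hC.prod isClosed_Icc
      have hclos2 : IsClosed Q := hC.prod isClosed_Icc
      have hinter : C ×ˢ Icc 0 ((k:ℝ)/n) ∩ Q = C ×ˢ {((k:ℝ)/n)} := by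
        rw [hQ_def, Set.prod_inter_prod, inter_self, Set.Icc_inter_Icc_eq_singleton hk0 hkk]
      have heq : EqOn F Fq (C ×ˢ Icc 0 ((k:ℝ)/n) ∩ Q) := by
        rw [hinter]
        rintro ⟨a, b⟩ ⟨ha, hb⟩
        rw [mem_singleton_iff] at hb
        subst hb
        show F (a, (k:ℝ)/n) = Fq (a, (k:ℝ)/n)
        show F (a, (k:ℝ)/n) = e a - L (u (a, (k:ℝ)/n)) + L (u (a, (k:ℝ)/n))
        rw [sub_add_cancel]
      obtain ⟨Fn, hFnc, hFnF, hFnq⟩ := paste hclos1 hclos2 hFc hQc heq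
      have hunion : C ×ˢ Icc 0 ((k:ℝ)/n) ∪ Q = C ×ˢ Icc 0 (((k:ℝ)+1)/n) := by
        rw [hQ_def, ← Set.prod_union, Set.Icc_union_Icc_eq_Icc hk0 hkk]
      have hcast : ((k+1 : ℕ) : ℝ) = (k:ℝ) + 1 := by push_cast; ring
      rw [hunion] at hFnc
      refine ⟨Fn, ?_, ?_, ?_⟩
      · rw [hcast]; exact hFnc
      · rw [hcast]
        rintro p hp
        rcases le_or_gt p.2 ((k:ℝ)/n) with h | h
        · have hps : p ∈ C ×ˢ Icc 0 ((k:ℝ)/n) := ⟨hp.1, hp.2.1, h⟩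
          rw [hFnF hps]
          exact hFl p hps
        · have hpq : p ∈ Q := ⟨hp.1, le_of_lt h, hp.2.2⟩
          rw [hFnq hpq]
          exact hQl p hpq
      · intro a ha
        have : (a, (0:ℝ)) ∈ C ×ˢ Icc 0 ((k:ℝ)/n) := ⟨ha, le_rfl, hk0⟩
        rw [hFnF this]
        exact hF0 a ha
  obtain ⟨F, h1, h2, h3⟩ := main n le_rfl
  rw [div_self (ne_of_gt hnR)] at h1 h2
  exact ⟨F, h1, h2, h3⟩



theorem square {exp : E → G} (hhom : ∀ x y : E, exp (x + y) = exp x * exp y)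
    (hsurj : Function.Surjective exp)
    {W : Set G} {L : G → E} (hWo : IsOpen W) (hW1 : (1:G) ∈ W)
    (hWL : ∀ w ∈ W, exp (L w) = w) (hLc : ContinuousOn L W)
    {ε : ℝ} (hε : 0 < ε) (hsep : ∀ x : E, ‖x‖ < ε → exp x = 1 → x = 0)
    {H : ℝ × ℝ → G} (hH : Continuous H) :
    ∃ F : ℝ × ℝ → E, ContinuousOn F (Icc 0 1 ×ˢ Icc 0 1) ∧
      ∀ p ∈ (Icc (0:ℝ) 1 ×ˢ Icc (0:ℝ) 1), exp (F p) = H p := by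
  haveI : IsTopologicalGroup G := topologicalGroup_of_lieGroup 𝓘(ℝ, E) (⊤ : ℕ∞)
  set K : Set (ℝ × ℝ) := Icc (0:ℝ) 1 ×ˢ Icc (0:ℝ) 1 with hK_def
  have hK : IsCompact K := isCompact_Icc.prod isCompact_Icc
  set U : (ℝ × ℝ) → Set (ℝ × ℝ) := fun q => H ⁻¹' ((fun g => (H q)⁻¹ * g) ⁻¹' W) with hU_def
  have hUo : ∀ q, IsOpen (U q) :=
    fun q => hH.isOpen_preimage _ (hWo.preimage (continuous_const.mul continuous_id))
  have hKU : K ⊆ ⋃ q, U q := by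
    intro p _
    refine mem_iUnion.mpr ⟨p, ?_⟩
    simp only [hU_def, mem_preimage, inv_mul_cancel]
    exact hW1
  obtain ⟨δ, hδ, hcov⟩ := lebesgue_number_lemma_of_metric hK hUo hKU
  obtain ⟨n0, hn0⟩ := exists_nat_one_div_lt hδ
  set n : ℕ := n0 + 1 with hn_def
  have hn : 0 < n := Nat.succ_pos n0
  have hnR : (0:ℝ) < n := by exact_mod_cast hn
  have hn1 : 1/(n:ℝ) < δ := by exact_mod_cast hn0
  have sheet : ∀ a b : ℝ, (a, b) ∈ K →
      ∃ x : E, ∀ p ∈ Icc a (a + 1/(n:ℝ)) ×ˢ Icc b (b + 1/(n:ℝ)), (exp x)⁻¹ * H p ∈ W := by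
    intro a b hab
    obtain ⟨q, hq⟩ := hcov (a, b) hab
    obtain ⟨x, hx⟩ := hsurj (H q)
    refine ⟨x, fun p hp => ?_⟩
    have hdist : dist p (a, b) < δ := by
      have h0n : (0:ℝ) ≤ 1/(n:ℝ) := by positivity
      have h1 : dist p.1 a ≤ 1/(n:ℝ) := by
        rw [Real.dist_eq, abs_sub_le_iff]
        exact ⟨by linarith [hp.1.2], by linarith [hp.1.1]⟩
      have h2 : dist p.2 b ≤ 1/(n:ℝ) := by
        rw [Real.dist_eq, abs_sub_le_iff]
        exact ⟨by linarith [hp.2.2], by linarith [hp.2.1]⟩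
      calc dist p (a, b) = max (dist p.1 a) (dist p.2 b) := Prod.dist_eq
        _ ≤ 1/(n:ℝ) := max_le h1 h2
        _ < δ := hn1
    have := hq (Metric.mem_ball.mpr hdist)
    rw [hU_def] at this
    simp only [mem_preimage] at this
    rwa [hx]
  -- strip lifts
  have strip : ∀ j : ℕ, j < n → ∃ F : ℝ × ℝ → E,
      ContinuousOn F (Icc ((j:ℝ)/n) (((j:ℝ)+1)/n) ×ˢ Icc 0 1) ∧
      ∀ p ∈ Icc ((j:ℝ)/n) (((j:ℝ)+1)/n) ×ˢ Icc (0:ℝ) 1, exp (F p) = H p := by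
    intro j hj
    have hjn : ((j:ℝ)+1)/n = (j:ℝ)/n + 1/n := by ring
    have hj1 : (j:ℝ)/n ≥ 0 := by positivity
    have hj2 : ((j:ℝ)+1)/n ≤ 1 := by
      rw [div_le_one hnR]
      have : (j:ℝ) + 1 ≤ n := by exact_mod_cast hj
      linarith
    have hmemK : ∀ i : ℕ, i < n → ((j:ℝ)/n, (i:ℝ)/n) ∈ K := by
      intro i hi
      have hi2 : (i:ℝ)/n ≤ 1 := by
        rw [div_le_one hnR]; exact_mod_cast le_of_lt hi
      have hj2' : (j:ℝ)/n ≤ 1 := le_trans (by rw [hjn]; linarith [one_div_pos.mpr hnR]) hj2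
      exact ⟨⟨hj1, hj2'⟩, ⟨by positivity, hi2⟩⟩
    have hsheet : ∀ i : ℕ, i < n → ∃ x : E,
        ∀ p ∈ (Icc ((j:ℝ)/n) (((j:ℝ)+1)/n)) ×ˢ Icc ((i:ℝ)/n) (((i:ℝ)+1)/n),
          (exp x)⁻¹ * H p ∈ W := by
      intro i hi
      obtain ⟨x, hx⟩ := sheet ((j:ℝ)/n) ((i:ℝ)/n) (hmemK i hi)
      refine ⟨x, fun p hp => hx p ?_⟩
      have hin : ((i:ℝ)+1)/n = (i:ℝ)/n + 1/n := by ring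
      exact ⟨⟨hp.1.1, by rw [← hjn]; exact hp.1.2⟩, ⟨hp.2.1, by rw [← hin]; exact hp.2.2⟩⟩
    -- initial lift on the bottom edge of the strip
    obtain ⟨x0, hx0⟩ := sheet ((j:ℝ)/n) 0 (by simpa using hmemK 0 hn)
    set f0 : ℝ → E := fun a => x0 + L ((exp x0)⁻¹ * H (a, 0)) with hf0_def
    have hf0mem : ∀ a ∈ Icc ((j:ℝ)/n) (((j:ℝ)+1)/n), (exp x0)⁻¹ * H (a, 0) ∈ W := by
      intro a ha
      apply hx0
      refine ⟨by rw [← hjn]; exact ha, le_rfl, ?_⟩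
      show (0:ℝ) ≤ 0 + 1/(n:ℝ)
      positivity
    have hf0c : ContinuousOn f0 (Icc ((j:ℝ)/n) (((j:ℝ)+1)/n)) := by
      refine continuousOn_const.add (hLc.comp ?_ hf0mem)
      exact (continuous_const.mul (hH.comp
        (continuous_id.prodMk continuous_const))).continuousOn
    have hf0l : ∀ a ∈ Icc ((j:ℝ)/n) (((j:ℝ)+1)/n), exp (f0 a) = H (a, 0) := by
      intro a ha
      show exp (x0 + L ((exp x0)⁻¹ * H (a, 0))) = H (a, 0)
      rw [hhom, hWL _ (hf0mem a ha)]
      group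
    obtain ⟨F, h1, h2, _⟩ := chain hhom hWL hLc hH isClosed_Icc hn hsheet hf0c hf0l
    exact ⟨F, h1, h2⟩
  -- glue the strips together
  have glue : ∀ j : ℕ, j < n → ∃ F : ℝ × ℝ → E,
      ContinuousOn F (Icc 0 (((j:ℝ)+1)/n) ×ˢ Icc 0 1) ∧
      ∀ p ∈ Icc (0:ℝ) (((j:ℝ)+1)/n) ×ˢ Icc (0:ℝ) 1, exp (F p) = H p := by
    intro j
    induction j with
    | zero =>
      intro _
      obtain ⟨F, hFc, hFl⟩ := strip 0 hn
      rw [Nat.cast_zero, zero_div] at hFc hFl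
      rw [Nat.cast_zero]
      exact ⟨F, hFc, hFl⟩
    | succ j ih =>
      intro hj1
      obtain ⟨F1, hF1c, hF1l⟩ := ih (Nat.lt_of_succ_lt hj1)
      obtain ⟨F2, hF2c, hF2l⟩ := strip (j+1) hj1
      have hcastj : ((j+1 : ℕ) : ℝ) = (j:ℝ)+1 := by push_cast; ring
      rw [hcastj] at hF2c hF2l
      set a : ℝ := ((j:ℝ)+1)/n with ha_def
      have ha0 : (0:ℝ) ≤ a := by positivity
      have hab : a ≤ ((j:ℝ)+1+1)/n := by rw [ha_def]; gcongr <;> linarith [hnR]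
      have hbot1 : (a, (0:ℝ)) ∈ Icc (0:ℝ) a ×ˢ Icc (0:ℝ) 1 :=
        ⟨⟨ha0, le_rfl⟩, le_rfl, zero_le_one⟩
      have hbot2 : (a, (0:ℝ)) ∈ Icc a (((j:ℝ)+1+1)/n) ×ˢ Icc (0:ℝ) 1 :=
        ⟨⟨le_rfl, hab⟩, le_rfl, zero_le_one⟩
      set k0 : E := F1 (a, 0) - F2 (a, 0) with hk0_def
      set F2' : ℝ × ℝ → E := fun p => F2 p + k0 with hF2'_def
      have hexpk0 : exp k0 = 1 := by
        rw [hk0_def, exp_sub hhom, hF1l _ hbot1, hF2l _ hbot2, mul_inv_cancel]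
      have hF2'l : ∀ p ∈ Icc a (((j:ℝ)+1+1)/n) ×ˢ Icc (0:ℝ) 1, exp (F2' p) = H p := by
        intro p hp
        show exp (F2 p + k0) = H p
        rw [hhom, hexpk0, mul_one]
        exact hF2l p hp
      have hF2'c : ContinuousOn F2' (Icc a (((j:ℝ)+1+1)/n) ×ˢ Icc (0:ℝ) 1) :=
        hF2c.add continuousOn_const
      have hinter : (Icc (0:ℝ) a ×ˢ Icc (0:ℝ) 1) ∩ (Icc a (((j:ℝ)+1+1)/n) ×ˢ Icc (0:ℝ) 1)
          = {a} ×ˢ Icc (0:ℝ) 1 := by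
        rw [Set.prod_inter_prod, inter_self, Set.Icc_inter_Icc_eq_singleton ha0 hab]
      have hSsub1 : ({a} ×ˢ Icc (0:ℝ) 1 : Set (ℝ × ℝ)) ⊆ Icc (0:ℝ) a ×ˢ Icc (0:ℝ) 1 := by
        rw [← hinter]; exact inter_subset_left
      have hSsub2 : ({a} ×ˢ Icc (0:ℝ) 1 : Set (ℝ × ℝ)) ⊆
          Icc a (((j:ℝ)+1+1)/n) ×ˢ Icc (0:ℝ) 1 := by
        rw [← hinter]; exact inter_subset_right
      have heq : EqOn F1 F2' ((Icc (0:ℝ) a ×ˢ Icc (0:ℝ) 1) ∩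
          (Icc a (((j:ℝ)+1+1)/n) ×ˢ Icc (0:ℝ) 1)) := by
        rw [hinter]
        intro p hp
        have hpre : IsPreconnected ({a} ×ˢ Icc (0:ℝ) 1 : Set (ℝ × ℝ)) :=
          isPreconnected_singleton.prod isPreconnected_Icc
        have hdc : ContinuousOn (fun p => F1 p - F2' p) ({a} ×ˢ Icc (0:ℝ) 1) :=
          (hF1c.mono hSsub1).sub (hF2'c.mono hSsub2)
        have hd1 : ∀ p ∈ ({a} ×ˢ Icc (0:ℝ) 1 : Set (ℝ × ℝ)),
            exp (F1 p - F2' p) = 1 := by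
          intro p hp
          rw [exp_sub hhom, hF1l p (hSsub1 hp), hF2'l p (hSsub2 hp), mul_inv_cancel]
        have hmema : ((a, (0:ℝ)) : ℝ × ℝ) ∈ ({a} ×ˢ Icc (0:ℝ) 1 : Set (ℝ × ℝ)) :=
          ⟨rfl, le_rfl, zero_le_one⟩
        have := disc hhom hε hsep hpre hdc hd1 hp hmema
        have hzero : F1 (a, (0:ℝ)) - F2' (a, (0:ℝ)) = 0 := by
          show F1 (a, (0:ℝ)) - (F2 (a, 0) + k0) = 0
          rw [hk0_def]; abel
        rw [hzero] at this
        exact sub_eq_zero.mp this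
      obtain ⟨Fn, hFnc, hFnF1, hFnF2⟩ := paste
        ((isClosed_Icc).prod isClosed_Icc) ((isClosed_Icc).prod isClosed_Icc)
        hF1c hF2'c heq
      have hunion : (Icc (0:ℝ) a ×ˢ Icc (0:ℝ) 1) ∪ (Icc a (((j:ℝ)+1+1)/n) ×ˢ Icc (0:ℝ) 1)
          = Icc (0:ℝ) (((j:ℝ)+1+1)/n) ×ˢ Icc (0:ℝ) 1 := by
        rw [← Set.union_prod, Set.Icc_union_Icc_eq_Icc ha0 hab]
      rw [hunion] at hFnc
      have hcast : ((j+1 : ℕ) : ℝ) + 1 = (j:ℝ)+1+1 := by push_cast; ring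
      refine ⟨Fn, by rw [hcast]; exact hFnc, ?_⟩
      rw [hcast]
      intro p hp
      rcases le_or_gt p.1 a with h | h
      · have hps : p ∈ Icc (0:ℝ) a ×ˢ Icc (0:ℝ) 1 := ⟨⟨hp.1.1, h⟩, hp.2⟩
        rw [hFnF1 hps]
        exact hF1l p hps
      · have hpq : p ∈ Icc a (((j:ℝ)+1+1)/n) ×ˢ Icc (0:ℝ) 1 := ⟨⟨le_of_lt h, hp.1.2⟩, hp.2⟩
        rw [hFnF2 hpq]
        exact hF2'l p hpq
  obtain ⟨F, hFc, hFl⟩ := glue n0 (by omega)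
  have hcast : ((n0:ℝ)+1)/n = 1 := by
    rw [hn_def]; push_cast; rw [div_self]; positivity
  rw [hcast] at hFc hFl
  exact ⟨F, hFc, hFl⟩



theorem inj {exp : E → G} (hhom : ∀ x y : E, exp (x + y) = exp x * exp y)
    (hcont : Continuous exp) (hsurj : Function.Surjective exp)
    {W : Set G} {L : G → E} (hWo : IsOpen W) (hW1 : (1:G) ∈ W)
    (hWL : ∀ w ∈ W, exp (L w) = w) (hLc : ContinuousOn L W)
    {ε : ℝ} (hε : 0 < ε) (hsep : ∀ x : E, ‖x‖ < ε → exp x = 1 → x = 0)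
    [SimplyConnectedSpace G] :
    Function.Injective exp := by
  suffices hker : ∀ u : E, exp u = 1 → u = 0 by
    intro x y hxy
    have h1 : exp (x - y) = 1 := by rw [exp_sub hhom, hxy, mul_inv_cancel]
    exact sub_eq_zero.mp (hker _ h1)
  intro u hu
  set p : Path (1:G) (1:G) :=
    { toFun := fun t => exp ((t : ℝ) • u)
      continuous_toFun := hcont.comp (continuous_subtype_val.smul continuous_const)
      source' := by simp [exp_zero hhom]
      target' := by simpa using hu } with hp_def
  obtain ⟨Hty⟩ := SimplyConnectedSpace.paths_homotopic p (Path.refl (1:G))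
  set H' : ℝ × ℝ → G := fun q =>
    Hty (Set.projIcc 0 1 zero_le_one q.1, Set.projIcc 0 1 zero_le_one q.2) with hH'_def
  have hH'c : Continuous H' := Hty.continuous.comp
    ((continuous_projIcc.comp continuous_fst).prodMk (continuous_projIcc.comp continuous_snd))
  obtain ⟨F, hFc, hFl⟩ := square hhom hsurj hWo hW1 hWL hLc hε hsep hH'c
  have h01 : (0:ℝ) ∈ Icc (0:ℝ) 1 := ⟨le_rfl, zero_le_one⟩
  have h11 : (1:ℝ) ∈ Icc (0:ℝ) 1 := ⟨zero_le_one, le_rfl⟩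
  -- boundary values of H'
  have hb0 : ∀ t ∈ Icc (0:ℝ) 1, H' (0, t) = exp (t • u) := by
    intro t ht
    show Hty (Set.projIcc 0 1 zero_le_one 0, Set.projIcc 0 1 zero_le_one t) = exp (t • u)
    rw [Set.projIcc_of_mem zero_le_one h01, Set.projIcc_of_mem zero_le_one ht]
    have : (⟨0, h01⟩ : unitInterval) = 0 := rfl
    rw [this, Hty.apply_zero]
    rfl
  have hb1 : ∀ t ∈ Icc (0:ℝ) 1, H' (1, t) = 1 := by
    intro t ht
    show Hty (Set.projIcc 0 1 zero_le_one 1, Set.projIcc 0 1 zero_le_one t) = 1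
    rw [Set.projIcc_of_mem zero_le_one h11, Set.projIcc_of_mem zero_le_one ht]
    have : (⟨1, h11⟩ : unitInterval) = 1 := rfl
    rw [this, Hty.apply_one]
    rfl
  have hbs0 : ∀ s ∈ Icc (0:ℝ) 1, H' (s, 0) = 1 := by
    intro s hs
    show Hty (Set.projIcc 0 1 zero_le_one s, Set.projIcc 0 1 zero_le_one 0) = 1
    rw [Set.projIcc_of_mem zero_le_one hs, Set.projIcc_of_mem zero_le_one h01]
    have h0I : (⟨0, h01⟩ : unitInterval) = 0 := rfl
    rw [h0I, Hty.eq_fst _ (Set.mem_insert 0 {1})]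
    show p 0 = 1
    exact p.source
  have hbs1 : ∀ s ∈ Icc (0:ℝ) 1, H' (s, 1) = 1 := by
    intro s hs
    show Hty (Set.projIcc 0 1 zero_le_one s, Set.projIcc 0 1 zero_le_one 1) = 1
    rw [Set.projIcc_of_mem zero_le_one hs, Set.projIcc_of_mem zero_le_one h11]
    have h1I : (⟨1, h11⟩ : unitInterval) = 1 := rfl
    rw [h1I, Hty.eq_fst _ (by simp)]
    show p 1 = 1
    exact p.target
  -- four applications of `disc`
  have hd1 : F (0, 1) - (1:ℝ) • u = F (0, 0) - (0:ℝ) • u := by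
    apply disc hhom hε hsep isPreconnected_Icc (d := fun t => F (0, t) - t • u)
      ?_ ?_ h11 h01
    · refine ContinuousOn.sub ?_ ((continuous_id.smul continuous_const).continuousOn)
      exact hFc.comp (Continuous.continuousOn (by fun_prop)) (fun t ht => ⟨h01, ht⟩)
    · intro t ht
      rw [exp_sub hhom, hFl (0, t) ⟨h01, ht⟩, hb0 t ht, mul_inv_cancel]
  have hd2 : F (1, 1) = F (1, 0) := by
    apply disc hhom hε hsep isPreconnected_Icc (d := fun t => F (1, t)) ?_ ?_ h11 h01
    · exact hFc.comp (Continuous.continuousOn (by fun_prop)) (fun t ht => ⟨h11, ht⟩)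
    · intro t ht
      rw [hFl (1, t) ⟨h11, ht⟩]
      exact hb1 t ht
  have hd3 : F (1, 0) = F (0, 0) := by
    apply disc hhom hε hsep isPreconnected_Icc (d := fun s => F (s, 0)) ?_ ?_ h11 h01
    · exact hFc.comp (Continuous.continuousOn (by fun_prop)) (fun s hs => ⟨hs, h01⟩)
    · intro s hs
      rw [hFl (s, 0) ⟨hs, h01⟩]
      exact hbs0 s hs
  have hd4 : F (0, 1) = F (1, 1) := by
    apply disc hhom hε hsep isPreconnected_Icc (d := fun s => F (s, 1)) ?_ ?_ h01 h11
    · exact hFc.comp (Continuous.continuousOn (by fun_prop)) (fun s hs => ⟨hs, h11⟩)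
    · intro s hs
      rw [hFl (s, 1) ⟨hs, h11⟩]
      exact hbs1 s hs
  have : u = F (0, 1) - F (0, 0) := by
    rw [one_smul, zero_smul, sub_zero] at hd1
    rw [← hd1]; abel
  rw [hd4, hd2, hd3, sub_self] at this
  exact this



end SCAE

/-- Let `G` be an abelian, connected, simply connected regular Lie group with
Lie algebra `𝔤` (here a Banach Lie group modeled on `E = 𝔤`).  Then the exponential map
`exp : 𝔤 → G` is an isomorphism of Lie groups, in particular a diffeomorphism: it is a bijective
group homomorphism (from the additive group `𝔤`) with a smooth inverse. -/
theorem simply_connected_abelian_exp_iso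
    {E : Type*} [NormedAddCommGroup E] [NormedSpace ℝ E] [CompleteSpace E]
    {G : Type*} [TopologicalSpace G] [ChartedSpace E G] [CommGroup G]
    [LieGroup 𝓘(ℝ, E) (⊤ : ℕ∞) G] [ConnectedSpace G] [SimplyConnectedSpace G]
    (exp : E → G)
    (hexp_smooth : ContMDiff 𝓘(ℝ, E) 𝓘(ℝ, E) (⊤ : ℕ∞) exp)
    (hexp_hom : ∀ x y : E, exp (x + y) = exp x * exp y)
    (hexp_deriv : ∀ v : E, mfderiv 𝓘(ℝ, E) 𝓘(ℝ, E) exp 0 v = v)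
    -- regularity of `G`: every smooth curve in the Lie algebra has a smooth right evolution:
    (hreg : ∀ X : ℝ → E, ContDiff ℝ (⊤ : ℕ∞) X →
      ∃ c : ℝ → G, ContMDiff 𝓘(ℝ) 𝓘(ℝ, E) (⊤ : ℕ∞) c ∧ c 0 = 1 ∧
        ∀ t : ℝ, mfderiv 𝓘(ℝ) 𝓘(ℝ, E) c t (1 : ℝ) =
          mfderiv 𝓘(ℝ, E) 𝓘(ℝ, E) (fun g : G => g * c t) 1 (X t)) :
    Function.Bijective exp ∧
    ∃ Φ : G → E, ContMDiff 𝓘(ℝ, E) 𝓘(ℝ, E) (⊤ : ℕ∞) Φ ∧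
      Function.LeftInverse Φ exp ∧ Function.RightInverse Φ exp := by
  classical
  obtain ⟨W, L, hWo, hW1, hLc, hWL, hLsm, ε, hε, hsep⟩ :=
    SCAE.local_data hexp_smooth hexp_hom hexp_deriv
  have hcont : Continuous exp := hexp_smooth.continuous
  have hsurj : Function.Surjective exp := SCAE.surj hexp_hom hcont hWo hW1 hWL
  have hinj : Function.Injective exp :=
    SCAE.inj hexp_hom hcont hsurj hWo hW1 hWL hLc hε hsep
  have hbij : Function.Bijective exp := ⟨hinj, hsurj⟩
  haveI : IsTopologicalGroup G := topologicalGroup_of_lieGroup 𝓘(ℝ, E) (⊤ : ℕ∞)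
  set Φ : G → E := Function.invFun exp with hΦ_def
  have hRI : Function.RightInverse Φ exp := Function.rightInverse_invFun hsurj
  refine ⟨hbij, Φ, ?_, Function.leftInverse_invFun hinj, hRI⟩
  intro g₀
  set x₀ : E := Φ g₀ with hx₀_def
  have hx₀ : exp x₀ = g₀ := hRI g₀
  set ψ : G → E := fun g => x₀ + L (g * g₀⁻¹) with hψ_def
  have hg₀inv : g₀ * g₀⁻¹ = 1 := mul_inv_cancel g₀
  have hψs : ContMDiffAt 𝓘(ℝ, E) 𝓘(ℝ, E) (⊤ : ℕ∞) ψ g₀ := by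
    have hm : ContMDiffAt 𝓘(ℝ, E) 𝓘(ℝ, E) (⊤ : ℕ∞) (fun g : G => g * g₀⁻¹) g₀ :=
      (contMDiff_mul_right (a := g₀⁻¹)).contMDiffAt
    have h1 : ContMDiffAt 𝓘(ℝ, E) 𝓘(ℝ, E) (⊤ : ℕ∞) L ((fun g : G => g * g₀⁻¹) g₀) := by
      simpa [hg₀inv] using hLsm
    exact contMDiffAt_const.add (h1.comp g₀ hm)
  have hO : IsOpen {g : G | g * g₀⁻¹ ∈ W} :=
    hWo.preimage (continuous_id.mul continuous_const)
  have hg₀O : g₀ ∈ {g : G | g * g₀⁻¹ ∈ W} := by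
    show g₀ * g₀⁻¹ ∈ W
    rw [hg₀inv]; exact hW1
  have hEq : Φ =ᶠ[nhds g₀] ψ := by
    filter_upwards [hO.mem_nhds hg₀O] with g hg
    apply hinj
    rw [hRI g]
    show g = exp (x₀ + L (g * g₀⁻¹))
    rw [hexp_hom, hWL _ hg, hx₀, mul_comm g g₀⁻¹, mul_inv_cancel_left]
  exact hψs.congr_of_eventuallyEq hEq
end

section
/- Let G be an abelian, connected regular Lie group with Lie algebra 𝔤. Then there is an open neighborhood V of 0 in 𝔤 such that exp(V) is open in G and exp restricted to V is a diffeomorphism onto exp(V); moreover exp induces an isomorphism of Lie groups 𝔤 / ker(exp) ≅ G. -/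
open scoped Manifold

/-!
The inverse function theorem, read in a chart of `G` at `1`, makes `exp` a local homeomorphism
near `0` whose local inverse is smooth at `1`. Since `exp` is a homomorphism, translating by
`exp x` moves this to every point: on a neighbourhood `V` of `0` with `V - V` inside the
domain of the local inverse, `exp` is injective and its inverse is
`h ↦ x + exp⁻¹ (h * (exp x)⁻¹)` near `exp x`, hence smooth; and `exp` is an open map. A
continuous open surjective homomorphism is a quotient map, so it descends to a homeomorphism
`𝔤 ⧸ ker exp ≃ G`.
-/

open Set Filter Function Topology

section InverseFunction

variable {𝕜 : Type*} [RCLike 𝕜] {E : Type*} [NormedAddCommGroup E] [NormedSpace 𝕜 E]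
  [CompleteSpace E] {M : Type*} [TopologicalSpace M] [ChartedSpace E M] {n : WithTop ℕ∞}
  [IsManifold 𝓘(𝕜, E) n M]

theorem ContMDiffAt.exists_openPartialHomeomorph_eqOn {f : E → M} {x : E} {f' : E ≃L[𝕜] E}
    (hf : ContMDiffAt 𝓘(𝕜, E) 𝓘(𝕜, E) n f x)
    (hf' : HasMFDerivAt 𝓘(𝕜, E) 𝓘(𝕜, E) f x (f' : E →L[𝕜] E)) (hn : 1 ≤ n) :
    ∃ e : OpenPartialHomeomorph E M, x ∈ e.source ∧ EqOn f e e.source ∧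
      ContMDiffAt 𝓘(𝕜, E) 𝓘(𝕜, E) n e.symm (f x) := by
  have : IsManifold 𝓘(𝕜, E) 1 M := .of_le hn
  set c := chartAt E (f x)
  have hxc : f x ∈ c.source := mem_chart_source E (f x)
  obtain ⟨A, hA⟩ : ∃ A : E ≃L[𝕜] E, (A : E →L[𝕜] E) = mfderiv 𝓘(𝕜, E) 𝓘(𝕜, E) c (f x) :=
    isInvertible_mfderiv_extChartAt (mem_extChartAt_source (f x))
  have hg' : HasFDerivAt (c ∘ f) ((f'.trans A : E ≃L[𝕜] E) : E →L[𝕜] E) x := by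
    have h := (hasMFDerivAt_extChartAt (I := 𝓘(𝕜, E)) hxc).comp x hf'
    rw [← hA] at h
    exact hasMFDerivAt_iff_hasFDerivAt.mp h
  have hg : ContDiffAt 𝕜 n (c ∘ f) x := ((contMDiffAt_extChartAt' hxc).comp x hf).contDiffAt
  have hn0 : n ≠ 0 := (zero_lt_one.trans_le hn).ne'
  obtain ⟨O, hOc, hO, hxO⟩ :=
    mem_nhds_iff.mp (hf.continuousAt.preimage_mem_nhds (c.open_source.mem_nhds hxc))
  set pl := hg.toOpenPartialHomeomorph _ hg' hn0
  refine ⟨(pl.restrOpen O hO).trans c.symm, ?_, fun y hy => (c.left_inv (hOc hy.1.2)).symm, ?_⟩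
  · exact ⟨⟨hg.mem_toOpenPartialHomeomorph_source hg' hn0, hxO⟩, c.map_source (hOc hxO)⟩
  · have hsymm : ContMDiffAt 𝓘(𝕜, E) 𝓘(𝕜, E) n pl.symm (c (f x)) :=
      (hg.to_localInverse hg' hn0).contMDiffAt
    exact hsymm.comp (f x) contMDiffAt_extChartAt

end InverseFunction

theorem exists_isOpen_zero_mem_sub_mem {E : Type*} [AddGroup E] [TopologicalSpace E]
    [IsTopologicalAddGroup E] {U : Set E} (hU : U ∈ 𝓝 0) :
    ∃ V : Set E, IsOpen V ∧ (0 : E) ∈ V ∧ ∀ x ∈ V, ∀ y ∈ V, y - x ∈ U := by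
  obtain ⟨W, hWo, hW0, hW⟩ := exists_open_nhds_zero_half hU
  refine ⟨W ∩ -W, hWo.inter hWo.neg, ⟨hW0, by simpa using hW0⟩, fun x hx y hy => ?_⟩
  rw [sub_eq_add_neg]
  exact hW y hy.1 (-x) hx.2

namespace AddChar

section Topological

variable {E G : Type*} [AddGroup E] [TopologicalSpace E] [Group G] [TopologicalSpace G]

theorem isOpenMap_of_nhds_one_le_map [IsTopologicalAddGroup E] [IsTopologicalGroup G]
    (χ : AddChar E G) (h : 𝓝 1 ≤ map χ (𝓝 0)) : IsOpenMap χ := by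
  refine IsOpenMap.of_nhds_le fun x => ?_
  calc 𝓝 (χ x) = map (χ x * ·) (𝓝 1) := (map_mul_left_nhds_one _).symm
    _ ≤ map (χ x * ·) (map χ (𝓝 0)) := map_mono h
    _ = map χ (map (x + ·) (𝓝 0)) := by simp only [map_map, comp_def, map_add_eq_mul]
    _ = map χ (𝓝 x) := by rw [map_add_left_nhds_zero]

theorem isOpenMap_of_eqOn_source [IsTopologicalAddGroup E] [IsTopologicalGroup G]
    (χ : AddChar E G) {e : OpenPartialHomeomorph E G} (he0 : 0 ∈ e.source)
    (heχ : EqOn χ e e.source) : IsOpenMap χ := by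
  refine χ.isOpenMap_of_nhds_one_le_map (le_of_eq ?_)
  rw [map_congr (eventuallyEq_of_mem (e.open_source.mem_nhds he0) heχ), e.map_nhds_eq he0,
    ← heχ he0, map_zero_eq_one]

theorem injOn_of_sub_mem_source (χ : AddChar E G) {e : OpenPartialHomeomorph E G}
    (heχ : EqOn χ e e.source) {V : Set E} (hV : ∀ x ∈ V, ∀ y ∈ V, y - x ∈ e.source) :
    InjOn χ V := by
  intro x hx y hy hxy
  have h0 : (0 : E) ∈ e.source := by simpa using hV x hx x hx
  have : e (y - x) = e 0 := by
    rw [← heχ (hV x hx y hy), ← heχ h0, sub_eq_add_neg, map_add_eq_mul, map_neg_eq_inv, hxy,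
      mul_inv_cancel, map_zero_eq_one]
  exact (sub_eq_zero.mp (e.injOn (hV x hx y hy) h0 this)).symm

end Topological

theorem contMDiffOn_invFunOn {𝕜 : Type*} [NontriviallyNormedField 𝕜] {E : Type*}
    [NormedAddCommGroup E] [NormedSpace 𝕜 E] {G : Type*} [TopologicalSpace G] [ChartedSpace E G]
    [Group G] {n : WithTop ℕ∞} [LieGroup 𝓘(𝕜, E) n G] (χ : AddChar E G)
    {e : OpenPartialHomeomorph E G} (heχ : EqOn χ e e.source)
    (he : ContMDiffAt 𝓘(𝕜, E) 𝓘(𝕜, E) n e.symm 1)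
    {V : Set E} (hV : ∀ x ∈ V, ∀ y ∈ V, y - x ∈ e.source) :
    ContMDiffOn 𝓘(𝕜, E) 𝓘(𝕜, E) n (invFunOn χ V) (χ '' V) := by
  rintro _ ⟨x, hx, rfl⟩
  have htranslate : ∀ y ∈ V, invFunOn χ V (χ y) = x + e.symm (χ y * (χ x)⁻¹) := by
    intro y hy
    rw [(χ.injOn_of_sub_mem_source heχ hV).leftInvOn_invFunOn hy, ← map_neg_eq_inv,
      ← map_add_eq_mul, ← sub_eq_add_neg, heχ (hV x hx y hy), e.left_inv (hV x hx y hy),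
      add_sub_cancel]
  have he' : ContMDiffAt 𝓘(𝕜, E) 𝓘(𝕜, E) n e.symm (χ x * (χ x)⁻¹) := by
    rwa [mul_inv_cancel]
  have hsmooth : ContMDiffAt 𝓘(𝕜, E) 𝓘(𝕜, E) n (fun h => x + e.symm (h * (χ x)⁻¹)) (χ x) :=
    contMDiffAt_const.add (he'.comp (χ x) contMDiff_mul_right.contMDiffAt)
  exact hsmooth.contMDiffWithinAt.congr (by rintro _ ⟨y, hy, rfl⟩; exact htranslate y hy)
    (htranslate x hx)

theorem exists_homeomorph_quotient {E G : Type*} [AddCommGroup E] [TopologicalSpace E]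
    [Group G] [TopologicalSpace G] (χ : AddChar E G) (hχ : IsQuotientMap χ) (K : AddSubgroup E)
    (hK : ∀ x : E, x ∈ K ↔ χ x = 1) :
    ∃ φ : (E ⧸ K) ≃ₜ G, (∀ x : E, φ (QuotientAddGroup.mk x) = χ x) ∧
      ∀ a b : E ⧸ K, φ (a + b) = φ a * φ b := by
  obtain rfl : K = χ.toAddMonoidHom.ker := AddSubgroup.ext fun x => by
    rw [hK, AddMonoidHom.mem_ker, toAddMonoidHom_apply, ofMul_eq_zero]
  set φ := Additive.toMul ∘ QuotientAddGroup.kerLift χ.toAddMonoidHom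
  have hφ : IsHomeomorph φ := isHomeomorph_iff_isQuotientMap_injective.mpr
    ⟨isQuotientMap_quotient_mk'.of_comp_isQuotientMap hχ,
      Additive.toMul.injective.comp (QuotientAddGroup.kerLift_injective _)⟩
  exact ⟨hφ.homeomorph, fun x => rfl, fun a b =>
    congrArg Additive.toMul (map_add (QuotientAddGroup.kerLift χ.toAddMonoidHom) a b)⟩

end AddChar

theorem abelian_connected_exp_local_diffeo_and_quotient_iso_general
    {E : Type*} [NormedAddCommGroup E] [NormedSpace ℝ E] [CompleteSpace E]
    {G : Type*} [TopologicalSpace G] [ChartedSpace E G] [CommGroup G]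
    [LieGroup 𝓘(ℝ, E) (⊤ : ℕ∞) G]
    (exp : E → G)
    (hexp_smooth : ContMDiff 𝓘(ℝ, E) 𝓘(ℝ, E) (⊤ : ℕ∞) exp)
    (hexp_hom : ∀ x y : E, exp (x + y) = exp x * exp y)
    (hexp_surj : Function.Surjective exp)
    (hexp_deriv : ∀ v : E, mfderiv 𝓘(ℝ, E) 𝓘(ℝ, E) exp 0 v = v)
    -- the kernel of `exp` as an additive subgroup of `𝔤`:
    (K : AddSubgroup E) (hK : ∀ x : E, x ∈ K ↔ exp x = 1) :
    (∃ V : Set E, IsOpen V ∧ (0 : E) ∈ V ∧ IsOpen (exp '' V) ∧ Set.InjOn exp V ∧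
      ∃ ψ : G → E, ContMDiffOn 𝓘(ℝ, E) 𝓘(ℝ, E) (⊤ : ℕ∞) ψ (exp '' V) ∧
        ∀ x ∈ V, ψ (exp x) = x) ∧
    ∃ φ : (E ⧸ K) ≃ₜ G,
      (∀ x : E, φ (QuotientAddGroup.mk x) = exp x) ∧
      ∀ a b : E ⧸ K, φ (a + b) = φ a * φ b := by
  have hexp_zero : exp 0 = 1 := by simpa using hexp_hom 0 0
  let χ : AddChar E G := ⟨exp, hexp_zero, hexp_hom⟩
  have : IsTopologicalGroup G := topologicalGroup_of_lieGroup 𝓘(ℝ, E) (⊤ : ℕ∞)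
  have hderiv : HasMFDerivAt 𝓘(ℝ, E) 𝓘(ℝ, E) exp 0
      ((ContinuousLinearEquiv.refl ℝ E : E ≃L[ℝ] E) : E →L[ℝ] E) := by
    have hid : mfderiv 𝓘(ℝ, E) 𝓘(ℝ, E) exp 0 = ContinuousLinearMap.id ℝ E :=
      ContinuousLinearMap.ext hexp_deriv
    rw [ContinuousLinearEquiv.coe_refl, ← hid]
    exact ((hexp_smooth 0).mdifferentiableAt (by simp)).hasMFDerivAt
  obtain ⟨e, he0, heχ, he⟩ := (hexp_smooth 0).exists_openPartialHomeomorph_eqOn hderiv (by simp)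
  rw [hexp_zero] at he
  obtain ⟨V, hVo, hV0, hV⟩ := exists_isOpen_zero_mem_sub_mem (e.open_source.mem_nhds he0)
  have hopen : IsOpenMap χ := χ.isOpenMap_of_eqOn_source he0 heχ
  have hinj : InjOn χ V := χ.injOn_of_sub_mem_source heχ hV
  refine ⟨⟨V, hVo, hV0, hopen V hVo, hinj, invFunOn χ V, χ.contMDiffOn_invFunOn heχ he hV,
    fun x hx => hinj.leftInvOn_invFunOn hx⟩, ?_⟩
  exact χ.exists_homeomorph_quotient
    (IsOpenQuotientMap.isQuotientMap ⟨hexp_surj, hexp_smooth.continuous, hopen⟩) K hK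

/-- Let `G` be an abelian, connected regular Lie group with Lie algebra `𝔤`
(here a Banach Lie group modeled on `E = 𝔤`) with exponential map `exp : 𝔤 → G`, a surjective
smooth group homomorphism (regularity).  Then there is an open neighborhood `V` of `0` in `𝔤`
such that `exp '' V` is open in `G` and `exp` restricted to `V` is a diffeomorphism onto
`exp '' V`; moreover `exp` induces an isomorphism of (topological) groups `𝔤 ⧸ ker exp ≃ G`. -/
theorem abelian_connected_exp_local_diffeo_and_quotient_iso
    {E : Type*} [NormedAddCommGroup E] [NormedSpace ℝ E] [CompleteSpace E]
    {G : Type*} [TopologicalSpace G] [ChartedSpace E G] [CommGroup G]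
    [LieGroup 𝓘(ℝ, E) (⊤ : ℕ∞) G] [ConnectedSpace G]
    (exp : E → G)
    (hexp_smooth : ContMDiff 𝓘(ℝ, E) 𝓘(ℝ, E) (⊤ : ℕ∞) exp)
    (hexp_hom : ∀ x y : E, exp (x + y) = exp x * exp y)
    (hexp_surj : Function.Surjective exp)
    (hexp_deriv : ∀ v : E, mfderiv 𝓘(ℝ, E) 𝓘(ℝ, E) exp 0 v = v)
    -- the kernel of `exp` as an additive subgroup of `𝔤`:
    (K : AddSubgroup E) (hK : ∀ x : E, x ∈ K ↔ exp x = 1) :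
    (∃ V : Set E, IsOpen V ∧ (0 : E) ∈ V ∧ IsOpen (exp '' V) ∧ Set.InjOn exp V ∧
      ∃ ψ : G → E, ContMDiffOn 𝓘(ℝ, E) 𝓘(ℝ, E) (⊤ : ℕ∞) ψ (exp '' V) ∧
        ∀ x ∈ V, ψ (exp x) = x) ∧
    ∃ φ : (E ⧸ K) ≃ₜ G,
      (∀ x : E, φ (QuotientAddGroup.mk x) = exp x) ∧
      ∀ a b : E ⧸ K, φ (a + b) = φ a * φ b :=
  abelian_connected_exp_local_diffeo_and_quotient_iso_general exp hexp_smooth hexp_hom hexp_surj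
    hexp_deriv K hK
end

section
/- The subgroup Z of L²([0,1], ℝ) consisting of (equivalence classes of) integer-valued square-integrable functions is a closed subgroup that is arcwise connected; in particular it is not discrete. -/
/-!
Truncating `f` to `(-∞, t]` keeps it integer valued, and `t ↦ f · 𝟙_{(-∞, t]}` is continuous in
`L²` because `|f|²` is uniformly absolutely continuous; letting `t` run from `0` to `1` joins `0`
to `f`. Closedness holds because `L²` convergence yields an a.e. convergent subsequence and `ℤ` is
closed in `ℝ`. Finally, a connected T1 space with two points has no isolated point, so `0` is a
limit of nonzero elements.
-/

open MeasureTheory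

/-- The subgroup of integer-valued functions in `L²([0,1], ℝ)`. -/
noncomputable def integerValuedL2 :
    Set (Lp ℝ 2 (volume.restrict (Set.Icc (0:ℝ) 1))) :=
  {f | ∀ᵐ x ∂(volume.restrict (Set.Icc (0:ℝ) 1)), ∃ n : ℤ, (f : ℝ → ℝ) x = (n : ℝ)}

open Set Filter Topology
open scoped Interval

namespace MeasureTheory.Lp

section AEMem

variable {α E : Type*} [MeasurableSpace α] [NormedAddCommGroup E] {p : ENNReal} {μ : Measure α}

def aeMemAddSubgroup (G : AddSubgroup E) : AddSubgroup (Lp E p μ) where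
  carrier := {f | ∀ᵐ x ∂μ, f x ∈ G}
  zero_mem' := by
    show ∀ᵐ x ∂μ, ((0 : Lp E p μ) : α → E) x ∈ G
    filter_upwards [Lp.coeFn_zero E p μ] with x hx
    rw [hx]
    exact G.zero_mem
  add_mem' {f g} hf hg := by
    show ∀ᵐ x ∂μ, ((f + g : Lp E p μ) : α → E) x ∈ G
    filter_upwards [Lp.coeFn_add f g, hf, hg] with x hx hfx hgx
    rw [hx]
    exact G.add_mem hfx hgx
  neg_mem' {f} hf := by
    show ∀ᵐ x ∂μ, ((-f : Lp E p μ) : α → E) x ∈ G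
    filter_upwards [Lp.coeFn_neg f, hf] with x hx hfx
    rw [hx]
    exact G.neg_mem hfx

theorem isClosed_setOf_ae_mem [Fact (1 ≤ p)] {S : Set E} (hS : IsClosed S) :
    IsClosed {f : Lp E p μ | ∀ᵐ x ∂μ, f x ∈ S} := by
  refine IsSeqClosed.isClosed fun {u g} hu hug => ?_
  obtain ⟨ns, -, hns⟩ := (tendstoInMeasure_of_tendsto_Lp hug).exists_seq_tendsto_ae
  filter_upwards [hns, ae_all_iff.2 hu] with x hx hux
  exact hS.mem_of_tendsto hx (Eventually.of_forall fun i => hux (ns i))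

end AEMem

section IndicatorIic

variable {E : Type*} [NormedAddCommGroup E] {p : ENNReal} {μ : Measure ℝ}

noncomputable def indicatorIic (f : Lp E p μ) (t : ℝ) : Lp E p μ :=
  ((Lp.memLp f).indicator measurableSet_Iic).toLp ((Iic t).indicator f)

theorem coeFn_indicatorIic (f : Lp E p μ) (t : ℝ) :
    indicatorIic f t =ᵐ[μ] (Iic t).indicator f :=
  MemLp.coeFn_toLp _

theorem indicatorIic_eq_zero (f : Lp E p μ) {t : ℝ} (ht : ∀ᵐ x ∂μ, t < x) :
    indicatorIic f t = 0 := by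
  refine Lp.ext ?_
  filter_upwards [coeFn_indicatorIic f t, Lp.coeFn_zero E p μ, ht] with x hx h0 htx
  rw [hx, h0, indicator_of_notMem (show x ∉ Iic t from not_le.2 htx)]
  rfl

theorem indicatorIic_eq_self (f : Lp E p μ) {t : ℝ} (ht : ∀ᵐ x ∂μ, x ≤ t) :
    indicatorIic f t = f := by
  refine Lp.ext ?_
  filter_upwards [coeFn_indicatorIic f t, ht] with x hx hxt
  rw [hx, indicator_of_mem (show x ∈ Iic t from hxt)]

theorem ae_indicatorIic_mem {S : Set E} (hS : 0 ∈ S) {f : Lp E p μ} (hf : ∀ᵐ x ∂μ, f x ∈ S)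
    (t : ℝ) : ∀ᵐ x ∂μ, indicatorIic f t x ∈ S := by
  filter_upwards [coeFn_indicatorIic f t, hf] with x hx hfx
  rw [hx]
  by_cases hxt : x ∈ Iic t
  · rwa [indicator_of_mem hxt]
  · rwa [indicator_of_notMem hxt]

theorem dist_indicatorIic [Fact (1 ≤ p)] (f : Lp E p μ) (s t : ℝ) :
    dist (indicatorIic f s) (indicatorIic f t) = (eLpNorm ((Ι s t).indicator f) p μ).toReal := by
  wlog hst : s ≤ t generalizing s t
  · rw [dist_comm, uIoc_comm]
    exact this t s (le_of_not_ge hst)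
  rw [Lp.dist_def, uIoc_of_le hst, ← Iic_sdiff_Iic, indicator_sdiff (Iic_subset_Iic.2 hst),
    ← eLpNorm_neg, neg_sub]
  congr 1
  apply eLpNorm_congr_ae
  filter_upwards [coeFn_indicatorIic f s, coeFn_indicatorIic f t] with x hs ht
  simp [hs, ht]

theorem uniformContinuous_indicatorIic [Fact (1 ≤ p)] (hp : p ≠ ⊤) (hμ : μ ≤ volume)
    (f : Lp E p μ) : UniformContinuous (indicatorIic f) := by
  refine Metric.uniformContinuous_iff.2 fun ε hε => ?_
  obtain ⟨δ, hδ, hfδ⟩ := (Lp.memLp f).eLpNorm_indicator_le Fact.out hp (half_pos hε)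
  refine ⟨δ, hδ, fun s t hst => ?_⟩
  have hμst : μ (Ι s t) ≤ ENNReal.ofReal δ := calc
    μ (Ι s t) ≤ volume (Ι s t) := hμ _
    _ = ENNReal.ofReal |t - s| := Real.volume_uIoc
    _ ≤ ENNReal.ofReal δ := by
      rw [abs_sub_comm]
      exact ENNReal.ofReal_le_ofReal hst.le
  rw [dist_indicatorIic]
  calc _ ≤ ε / 2 := ENNReal.toReal_le_of_le_ofReal (half_pos hε).le (hfδ _ measurableSet_uIoc hμst)
    _ < ε := half_lt_self hε

theorem isPathConnected_setOf_ae_mem [Fact (1 ≤ p)] (hp : p ≠ ⊤) (hμ : μ ≤ volume) {a b : ℝ}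
    (ha : ∀ᵐ x ∂μ, a < x) (hb : ∀ᵐ x ∂μ, x ≤ b) {S : Set E} (hS : 0 ∈ S) :
    IsPathConnected {f : Lp E p μ | ∀ᵐ x ∂μ, f x ∈ S} := by
  have h0 : (0 : Lp E p μ) ∈ {f : Lp E p μ | ∀ᵐ x ∂μ, f x ∈ S} := by
    filter_upwards [Lp.coeFn_zero E p μ] with x hx
    rwa [hx]
  refine ⟨0, h0, fun {f} hf => ?_⟩
  have hrange : range (indicatorIic f) ⊆ {f : Lp E p μ | ∀ᵐ x ∂μ, f x ∈ S} := by
    rintro _ ⟨t, rfl⟩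
    exact ae_indicatorIic_mem hS hf t
  have hpath := isPathConnected_range (uniformContinuous_indicatorIic hp hμ f).continuous
  exact (hpath.joinedIn _ ⟨a, indicatorIic_eq_zero f ha⟩ _ ⟨b, indicatorIic_eq_self f hb⟩).mono
    hrange

end IndicatorIic

end MeasureTheory.Lp

theorem IsPreconnected.exists_mem_ne_dist_lt {X : Type*} [MetricSpace X] {s : Set X}
    (hs : IsPreconnected s) (hnt : s.Nontrivial) {x : X} (hx : x ∈ s) {ε : ℝ} (hε : 0 < ε) :
    ∃ y ∈ s, y ≠ x ∧ dist y x < ε := by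
  obtain ⟨y, ⟨hyx, hys⟩, hne⟩ :=
    accPt_iff_nhds.1 (hs.preperfect_of_nontrivial hnt x hx) _ (Metric.ball_mem_nhds x hε)
  exact ⟨y, hys, hne, hyx⟩

theorem integerValuedL2_eq_aeMemAddSubgroup :
    integerValuedL2 = (Lp.aeMemAddSubgroup (p := 2) (μ := volume.restrict (Icc (0:ℝ) 1))
      (Int.castAddHom ℝ).range : Set (Lp ℝ 2 (volume.restrict (Icc (0:ℝ) 1)))) := by
  ext f
  show (∀ᵐ x ∂_, _) ↔ ∀ᵐ x ∂_, _
  simp only [AddMonoidHom.mem_range, Int.coe_castAddHom, eq_comm]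

theorem const_one_mem_integerValuedL2 :
    Lp.const 2 (volume.restrict (Icc (0:ℝ) 1)) (1 : ℝ) ∈ integerValuedL2 := by
  filter_upwards [Lp.coeFn_const 2 (volume.restrict (Icc (0:ℝ) 1)) (1 : ℝ)] with x hx
  exact ⟨1, by rw [hx]; simp⟩

theorem integerValuedL2_nontrivial : integerValuedL2.Nontrivial := by
  refine ⟨_, const_one_mem_integerValuedL2, 0, ?_, fun h => ?_⟩
  · rw [integerValuedL2_eq_aeMemAddSubgroup]
    exact zero_mem _
  · simpa [Lp.norm_const'] using congrArg norm h

theorem isClosed_integerValuedL2 : IsClosed integerValuedL2 := by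
  rw [integerValuedL2_eq_aeMemAddSubgroup]
  refine Lp.isClosed_setOf_ae_mem ?_
  rw [AddMonoidHom.coe_range, Int.coe_castAddHom]
  exact Int.isClosedEmbedding_coe_real.isClosed_range

theorem isPathConnected_integerValuedL2 : IsPathConnected integerValuedL2 := by
  rw [integerValuedL2_eq_aeMemAddSubgroup]
  exact Lp.isPathConnected_setOf_ae_mem ENNReal.ofNat_ne_top Measure.restrict_le_self
    (a := -1) (b := 1) ((ae_restrict_mem measurableSet_Icc).mono fun x hx => by linarith [hx.1])
    ((ae_restrict_mem measurableSet_Icc).mono fun x hx => hx.2) (zero_mem _)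

/-- The subgroup `Z` of `L²([0,1], ℝ)` consisting of (equivalence classes of)
integer-valued square-integrable functions is a closed subgroup that is arcwise connected; in
particular it is not discrete. -/
theorem integerValuedL2_closed_pathConnected_not_discrete :
    ((0 : Lp ℝ 2 (volume.restrict (Set.Icc (0:ℝ) 1))) ∈ integerValuedL2 ∧
      (∀ f g, f ∈ integerValuedL2 → g ∈ integerValuedL2 → f + g ∈ integerValuedL2) ∧
      (∀ f, f ∈ integerValuedL2 → -f ∈ integerValuedL2)) ∧
    IsClosed integerValuedL2 ∧
    IsPathConnected integerValuedL2 ∧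
    ∀ ε : ℝ, 0 < ε → ∃ f ∈ integerValuedL2, f ≠ 0 ∧ ‖f‖ < ε := by
  have hsubgroup : (0 : Lp ℝ 2 (volume.restrict (Set.Icc (0:ℝ) 1))) ∈ integerValuedL2 ∧
      (∀ f g, f ∈ integerValuedL2 → g ∈ integerValuedL2 → f + g ∈ integerValuedL2) ∧
      (∀ f, f ∈ integerValuedL2 → -f ∈ integerValuedL2) := by
    rw [integerValuedL2_eq_aeMemAddSubgroup]
    exact ⟨zero_mem _, fun _ _ => add_mem, fun _ => neg_mem⟩
  have hconn := isPathConnected_integerValuedL2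
  refine ⟨hsubgroup, isClosed_integerValuedL2, hconn, fun ε hε => ?_⟩
  obtain ⟨f, hf, hf0, hfε⟩ := hconn.isConnected.isPreconnected.exists_mem_ne_dist_lt
    integerValuedL2_nontrivial hsubgroup.1 hε
  exact ⟨f, hf, hf0, by rwa [dist_zero_right] at hfε⟩
end
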